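/- arXiv:2011.01295 — 2 statements merged into one kernel-verified Lean document; each statement's English description precedes it below -/
import Mathlib

section
/- Let x_b ∈ I and let M, M̃ be integers with M ≥ M̃ ≥ 1 and M ≥ 2. Let α, c_{−1}, c_0, c_1, d_0, …, d_{M̃−1} : ℝ → ℂ be continuous on a neighborhood of 0 with α(0) ≠ 0. Assume that, as h → 0: c_1(h)·𝔈_1(h) − α(h) = O(h^{M+1}); c_{−1}(h)·𝔈_1(−h) − α(h) = O(h^{M+1}); c_0(h) + c_1(h)·𝔈_0(h) + c_{−1}(h)·𝔈_0(−h) = O(h^{M+2}); and, for each 0 ≤ ℓ ≤ M̃−1, d_ℓ(h) + δ_{ℓ,0} − c_1(h)·𝔉_ℓ(h) − (−1)^ℓ·c_{−1}(h)·𝔉_ℓ(−h) = O(h^{M̃−ℓ}), where δ_{ℓ,0} = 1 if ℓ = 0 and δ_{ℓ,0} = 0 otherwise. Then for every infinitely differentiable u : I → ℂ satisfying (a u')' + k u = f on I, one has, as h → 0: c_{−1}(h)·u(x_b−h) + c_0(h)·u(x_b) + c_1(h)·u(x_b+h) − h²·Σ_{ℓ=0}^{M̃−1} d_ℓ(h)·h^ℓ·f^{(ℓ)}(x_b)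 − h²·f(x_b) = O(h^{M̃+2}); equivalently, the compact finite difference scheme L_h u(x_b) := h^{−2}[c_{−1}(h)u(x_b−h)+c_0(h)u(x_b)+c_1(h)u(x_b+h)] − Σ_{ℓ=0}^{M̃−1} d_ℓ(h)h^ℓ f^{(ℓ)}(x_b) has accuracy order M̃ at x_b, i.e. L_h u(x_b) − f(x_b) = O(h^{M̃}). -/
/-!
Differentiating `(a u')' + k u = f` repeatedly gives
`u⁽ʲ⁾ = E_{j,0} u + E_{j,1} u' + ∑_ℓ F_{j,ℓ} f⁽ˡ⁾` for `j ≥ 2`, so the Taylor polynomial of `u`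
at `x_b` of degree `M + 1` is `u(x_b) 𝔈₀(h) + h u'(x_b) 𝔈₁(h) + ∑_{ℓ<M} h^(ℓ+2) f⁽ˡ⁾(x_b) 𝔉_ℓ(h)`.
Inserting it at `±h` into the stencil, the conditions on `c₀, c₁, c₋₁` cancel the `u(x_b)` and
`u'(x_b)` terms to order `h^(M+2)` (`c₁` and `c₋₁` being bounded near `0`), and the conditions on
`d_ℓ` cancel the `f⁽ˡ⁾(x_b)` terms with `ℓ < M̃` to order `h^(M̃+2)`: replacing `𝔉_ℓ` of degree
`M + 1` by that of degree `M̃ + 1` only costs `O(h^(M̃-ℓ))`.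
-/

open Filter Topology Asymptotics

/-- `Ecoef a k n = (E_{n+2,0}, E_{n+2,1})` from the recursion of the paper. -/
noncomputable def Ecoef (a : ℝ → ℝ) (k : ℝ → ℂ) : ℕ → (ℝ → ℂ) × (ℝ → ℂ)
  | 0 => (fun x => -k x / (a x : ℂ), fun x => -((deriv a x : ℝ) : ℂ) / (a x : ℂ))
  | n + 1 =>
      (fun x => deriv (Ecoef a k n).1 x - k x / (a x : ℂ) * (Ecoef a k n).2 x,
       fun x => (Ecoef a k n).1 x + deriv (Ecoef a k n).2 x
          - ((deriv a x : ℝ) : ℂ) / (a x : ℂ) * (Ecoef a k n).2 x)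

/-- `E_{j,0}` for `j ≥ 2` (junk value for `j < 2`). -/
noncomputable def Ej0 (a : ℝ → ℝ) (k : ℝ → ℂ) (j : ℕ) : ℝ → ℂ := (Ecoef a k (j - 2)).1

/-- `E_{j,1}` for `j ≥ 2` (junk value for `j < 2`). -/
noncomputable def Ej1 (a : ℝ → ℝ) (k : ℝ → ℂ) (j : ℕ) : ℝ → ℂ := (Ecoef a k (j - 2)).2

/-- `Fcoef a k n m = F_{n+2, m-1}` (second index shifted by one: `m = ℓ + 1`, `ℓ ≥ -1`). -/
noncomputable def Fcoef (a : ℝ → ℝ) (k : ℝ → ℂ) : ℕ → ℕ → ℝ → ℂ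
  | 0, 0 => fun x => (Ecoef a k 0).2 x / (a x : ℂ)
  | 0, 1 => fun x => 1 / (a x : ℂ)
  | 0, _ + 2 => fun _ => 0
  | n + 1, 0 => fun x => (Ecoef a k (n + 1)).2 x / (a x : ℂ)
  | n + 1, m + 1 => fun x => deriv (Fcoef a k n (m + 1)) x + Fcoef a k n m x

/-- `F_{j,ℓ}` for `j ≥ 2`, `ℓ ≥ 0` (junk value for `j < 2`). -/
noncomputable def Fjl (a : ℝ → ℝ) (k : ℝ → ℂ) (j ℓ : ℕ) : ℝ → ℂ := Fcoef a k (j - 2) (ℓ + 1)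

/-- `𝔈₀(h) = 1 + ∑_{j=2}^{B} E_{j,0}(x_b) h^j / j!`. -/
noncomputable def EPoly0 (a : ℝ → ℝ) (k : ℝ → ℂ) (xb : ℝ) (B : ℕ) (h : ℝ) : ℂ :=
  1 + ∑ j ∈ Finset.Icc 2 B, Ej0 a k j xb * (h : ℂ) ^ j / (Nat.factorial j : ℂ)

/-- `𝔈₁(h) = 1 + ∑_{j=2}^{B} E_{j,1}(x_b) h^(j-1) / j!`. -/
noncomputable def EPoly1 (a : ℝ → ℝ) (k : ℝ → ℂ) (xb : ℝ) (B : ℕ) (h : ℝ) : ℂ :=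
  1 + ∑ j ∈ Finset.Icc 2 B, Ej1 a k j xb * (h : ℂ) ^ (j - 1) / (Nat.factorial j : ℂ)

/-- `𝔉_ℓ(h) = ∑_{j=ℓ+2}^{B} F_{j,ℓ}(x_b) h^(j-ℓ-2) / j!`. -/
noncomputable def FPoly (a : ℝ → ℝ) (k : ℝ → ℂ) (xb : ℝ) (ℓ B : ℕ) (h : ℝ) : ℂ :=
  ∑ j ∈ Finset.Icc (ℓ + 2) B, Fjl a k j ℓ xb * (h : ℂ) ^ (j - ℓ - 2) / (Nat.factorial j : ℂ)

open scoped ContDiff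

section Smooth

variable {𝕜 F : Type*} [NontriviallyNormedField 𝕜] [NormedAddCommGroup F] [NormedSpace 𝕜 F]
  {s : Set 𝕜} {g : 𝕜 → F}

theorem ContDiffOn.deriv_of_isOpen_infty (hg : ContDiffOn 𝕜 ∞ g s) (hs : IsOpen s) :
    ContDiffOn 𝕜 ∞ (deriv g) s :=
  hg.deriv_of_isOpen hs le_rfl

theorem ContDiffOn.iteratedDeriv_of_isOpen (hg : ContDiffOn 𝕜 ∞ g s) (hs : IsOpen s) (m : ℕ) :
    ContDiffOn 𝕜 ∞ (iteratedDeriv m g) s := by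
  induction m with
  | zero => simpa using hg
  | succ m ih => simpa only [iteratedDeriv_succ] using ih.deriv_of_isOpen_infty hs

theorem ContDiffOn.hasDerivAt_of_isOpen (hg : ContDiffOn 𝕜 ∞ g s) (hs : IsOpen s) {x : 𝕜}
    (hx : x ∈ s) : HasDerivAt g (deriv g x) x :=
  ((hg.differentiableOn (by simp)).differentiableAt (hs.mem_nhds hx)).hasDerivAt

end Smooth

section Taylor

variable {E : Type*} [NormedAddCommGroup E] [NormedSpace ℝ E]

theorem taylorWithinEval_isBigO {f : ℝ → E} {s : Set ℝ} {x₀ : ℝ} {n : ℕ} (hs : Convex ℝ s)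
    (hx₀ : x₀ ∈ s) (hf : ContDiffOn ℝ (n + 1) f s) :
    (fun x => f x - taylorWithinEval f n s x₀ x) =O[𝓝[s] x₀] fun x => (x - x₀) ^ (n + 1) := by
  have hnext := (taylor_isLittleO hs hx₀ hf).isBigO
  have hterm : (fun x => (((n + 1 : ℝ) * n.factorial)⁻¹ * (x - x₀) ^ (n + 1)) •
      iteratedDerivWithin (n + 1) f s x₀) =O[𝓝[s] x₀] fun x => (x - x₀) ^ (n + 1) :=
    (((isBigO_refl _ _).const_mul_left _).smul (isBigO_const_const _ one_ne_zero _)).congr_right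
      fun x => by rw [smul_eq_mul, mul_one]
  refine (hnext.add hterm).congr_left fun x => ?_
  simp only [taylorWithinEval_succ]
  abel

theorem isBigO_sub_taylor_sum {f : ℝ → E} {s : Set ℝ} {x₀ : ℝ} (hs : IsOpen s) (hconv : Convex ℝ s)
    (hx₀ : x₀ ∈ s) (hf : ContDiffOn ℝ ∞ f s) (n : ℕ) :
    (fun h : ℝ => f (x₀ + h) - ∑ m ∈ Finset.range (n + 1),
        (h ^ m / m.factorial) • iteratedDeriv m f x₀) =O[𝓝 0] fun h => h ^ (n + 1) := by
  have hT := taylorWithinEval_isBigO hconv hx₀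
    (hf.of_le (by exact_mod_cast le_top) : ContDiffOn ℝ (n + 1) f s)
  rw [hs.nhdsWithin_eq hx₀] at hT
  have hshift : Tendsto (fun h : ℝ => x₀ + h) (𝓝 0) (𝓝 x₀) := by
    simpa using (continuous_const_add x₀).tendsto 0
  refine (hT.comp_tendsto hshift).congr (fun h => ?_) (fun h => by simp)
  simp only [Function.comp_apply, taylor_within_apply, add_sub_cancel_left]
  congr 1
  refine Finset.sum_congr rfl fun m _ => ?_
  rw [iteratedDerivWithin_of_isOpen hs hx₀, div_eq_inv_mul]

end Taylor

theorem ContDiffOn.div_of_normedAlgebra {𝕜 𝕜' E : Type*} [NontriviallyNormedField 𝕜]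
    [NormedField 𝕜'] [NormedAlgebra 𝕜 𝕜'] [CompleteSpace 𝕜'] [NormedAddCommGroup E]
    [NormedSpace 𝕜 E] {s : Set E} {n : WithTop ℕ∞} {g₁ g₂ : E → 𝕜'} (h₁ : ContDiffOn 𝕜 n g₁ s)
    (h₂ : ContDiffOn 𝕜 n g₂ s) (hne : ∀ x ∈ s, g₂ x ≠ 0) :
    ContDiffOn 𝕜 n (fun x => g₁ x / g₂ x) s := by
  simpa only [div_eq_mul_inv] using h₁.mul (h₂.fun_inv hne)

section Helmholtz

variable {s : Set ℝ} {a : ℝ → ℝ} {k f u : ℝ → ℂ}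

theorem ContDiffOn.ofReal_comp {n : WithTop ℕ∞} (ha : ContDiffOn ℝ n a s) :
    ContDiffOn ℝ n (fun x => (a x : ℂ)) s :=
  Complex.ofRealCLM.contDiff.comp_contDiffOn ha

theorem contDiffOn_Ecoef (hs : IsOpen s) (ha : ContDiffOn ℝ ∞ a s) (hk : ContDiffOn ℝ ∞ k s)
    (hane : ∀ x ∈ s, a x ≠ 0) (n : ℕ) :
    ContDiffOn ℝ ∞ (Ecoef a k n).1 s ∧ ContDiffOn ℝ ∞ (Ecoef a k n).2 s := by
  have haC : ContDiffOn ℝ ∞ (fun x => (a x : ℂ)) s := ha.ofReal_comp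
  have hane' : ∀ x ∈ s, (a x : ℂ) ≠ 0 := fun x hx => Complex.ofReal_ne_zero.mpr (hane x hx)
  have hda : ContDiffOn ℝ ∞ (fun x => ((deriv a x : ℝ) : ℂ)) s :=
    (ha.deriv_of_isOpen_infty hs).ofReal_comp
  induction n with
  | zero => exact ⟨hk.neg.div_of_normedAlgebra haC hane', hda.neg.div_of_normedAlgebra haC hane'⟩
  | succ n ih =>
    exact ⟨(ih.1.deriv_of_isOpen_infty hs).sub ((hk.div_of_normedAlgebra haC hane').mul ih.2),
      (ih.1.add (ih.2.deriv_of_isOpen_infty hs)).sub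
        ((hda.div_of_normedAlgebra haC hane').mul ih.2)⟩

theorem contDiffOn_Fcoef (hs : IsOpen s) (ha : ContDiffOn ℝ ∞ a s) (hk : ContDiffOn ℝ ∞ k s)
    (hane : ∀ x ∈ s, a x ≠ 0) (n m : ℕ) : ContDiffOn ℝ ∞ (Fcoef a k n m) s := by
  have haC : ContDiffOn ℝ ∞ (fun x => (a x : ℂ)) s := ha.ofReal_comp
  have hane' : ∀ x ∈ s, (a x : ℂ) ≠ 0 := fun x hx => Complex.ofReal_ne_zero.mpr (hane x hx)
  induction n generalizing m with
  | zero =>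
    match m with
    | 0 => exact (contDiffOn_Ecoef hs ha hk hane 0).2.div_of_normedAlgebra haC hane'
    | 1 => exact contDiffOn_const.div_of_normedAlgebra haC hane'
    | _ + 2 => exact contDiffOn_const
  | succ n ih =>
    match m with
    | 0 => exact (contDiffOn_Ecoef hs ha hk hane (n + 1)).2.div_of_normedAlgebra haC hane'
    | m + 1 => exact ((ih (m + 1)).deriv_of_isOpen_infty hs).add (ih m)

theorem Fcoef_eq_zero_of_le {n m : ℕ} (h : n + 2 ≤ m) : Fcoef a k n m = 0 := by
  induction n generalizing m with
  | zero => obtain ⟨m, rfl⟩ := Nat.exists_eq_add_of_le' h; rfl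
  | succ n ih =>
    obtain ⟨m, rfl⟩ := Nat.exists_eq_add_of_le' (show 1 ≤ m by omega)
    funext x
    simp only [Fcoef, ih (show n + 2 ≤ m + 1 by omega), ih (show n + 2 ≤ m by omega)]
    simp

theorem Fcoef_zero (n : ℕ) : Fcoef a k n 0 = fun x => (Ecoef a k n).2 x / (a x : ℂ) := by
  cases n <;> rfl

theorem sum_Fcoef_succ_mul (x : ℝ) (φ : ℕ → ℂ) (n : ℕ) :
    ∑ m ∈ Finset.range (n + 2), Fcoef a k (n + 1) (m + 1) x * φ m
      = ∑ m ∈ Finset.range (n + 1),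
          (deriv (Fcoef a k n (m + 1)) x * φ m + Fcoef a k n (m + 1) x * φ (m + 1))
        + Fcoef a k n 0 x * φ 0 := by
  have hlast : deriv (Fcoef a k n (n + 2)) x = 0 := by simp [Fcoef_eq_zero_of_le le_rfl]
  simp only [Fcoef, add_mul, Finset.sum_add_distrib]
  rw [Finset.sum_range_succ, hlast, Finset.sum_range_succ' (fun m => Fcoef a k n m x * φ m)]
  ring

theorem deriv_deriv_eq_of_helmholtz (hs : IsOpen s) (ha : ContDiffOn ℝ ∞ a s)
    (hane : ∀ x ∈ s, a x ≠ 0) (hu : ContDiffOn ℝ ∞ u s)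
    (hode : ∀ x ∈ s, deriv (fun y => (a y : ℂ) * deriv u y) x + k x * u x = f x)
    {x : ℝ} (hx : x ∈ s) :
    deriv (deriv u) x
      = (Ecoef a k 0).1 x * u x + (Ecoef a k 0).2 x * deriv u x + Fcoef a k 0 1 x * f x := by
  have hax : (a x : ℂ) ≠ 0 := Complex.ofReal_ne_zero.mpr (hane x hx)
  have hflux : HasDerivAt (fun y => (a y : ℂ) * deriv u y)
      (((deriv a x : ℝ) : ℂ) * deriv u x + a x * deriv (deriv u) x) x :=
    (ha.hasDerivAt_of_isOpen hs hx).ofReal_comp.mul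
      ((hu.deriv_of_isOpen_infty hs).hasDerivAt_of_isOpen hs hx)
  have hode_x := hode x hx
  rw [hflux.deriv] at hode_x
  show _ = -k x / a x * u x + -((deriv a x : ℝ) : ℂ) / a x * deriv u x + 1 / a x * f x
  field_simp
  linear_combination hode_x

theorem iteratedDeriv_add_two_eq_of_helmholtz (hs : IsOpen s) (ha : ContDiffOn ℝ ∞ a s)
    (hk : ContDiffOn ℝ ∞ k s) (hf : ContDiffOn ℝ ∞ f s) (hane : ∀ x ∈ s, a x ≠ 0)
    (hu : ContDiffOn ℝ ∞ u s)
    (hode : ∀ x ∈ s, deriv (fun y => (a y : ℂ) * deriv u y) x + k x * u x = f x) (n : ℕ) :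
    ∀ x ∈ s, iteratedDeriv (n + 2) u x
      = (Ecoef a k n).1 x * u x + (Ecoef a k n).2 x * deriv u x
        + ∑ m ∈ Finset.range (n + 1), Fcoef a k n (m + 1) x * iteratedDeriv m f x := by
  induction n with
  | zero =>
    intro x hx
    simp [iteratedDeriv_succ, deriv_deriv_eq_of_helmholtz hs ha hane hu hode hx]
  | succ n ih =>
    intro x hx
    obtain ⟨hE₀, hE₁⟩ := contDiffOn_Ecoef hs ha hk hane n
    have hrhs : HasDerivAt (fun y => (Ecoef a k n).1 y * u y + (Ecoef a k n).2 y * deriv u y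
          + ∑ m ∈ Finset.range (n + 1), Fcoef a k n (m + 1) y * iteratedDeriv m f y)
        (deriv (Ecoef a k n).1 x * u x + (Ecoef a k n).1 x * deriv u x
          + (deriv (Ecoef a k n).2 x * deriv u x + (Ecoef a k n).2 x * deriv (deriv u) x)
          + ∑ m ∈ Finset.range (n + 1), (deriv (Fcoef a k n (m + 1)) x * iteratedDeriv m f x
            + Fcoef a k n (m + 1) x * iteratedDeriv (m + 1) f x)) x := by
      refine (((hE₀.hasDerivAt_of_isOpen hs hx).mul (hu.hasDerivAt_of_isOpen hs hx)).add
        ((hE₁.hasDerivAt_of_isOpen hs hx).mul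
          ((hu.deriv_of_isOpen_infty hs).hasDerivAt_of_isOpen hs hx))).add
        (HasDerivAt.fun_sum fun m _ => ?_)
      rw [iteratedDeriv_succ]
      exact ((contDiffOn_Fcoef hs ha hk hane n (m + 1)).hasDerivAt_of_isOpen hs hx).mul
        ((hf.iteratedDeriv_of_isOpen hs m).hasDerivAt_of_isOpen hs hx)
    have hlocal : iteratedDeriv (n + 2) u =ᶠ[𝓝 x] _ :=
      Filter.eventuallyEq_of_mem (hs.mem_nhds hx) ih
    rw [iteratedDeriv_succ, hlocal.deriv_eq, hrhs.deriv,
      deriv_deriv_eq_of_helmholtz hs ha hane hu hode hx, sum_Fcoef_succ_mul, Fcoef_zero]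
    simp only [Ecoef, Fcoef, iteratedDeriv_zero]
    ring

theorem sum_range_add_two_eq {A : Type*} [AddCommMonoid A] (g : ℕ → A) (B : ℕ) :
    ∑ n ∈ Finset.range (B + 2), g n = g 0 + g 1 + ∑ j ∈ Finset.Icc 2 (B + 1), g j := by
  rw [Finset.range_eq_Ico, ← Finset.sum_Ico_consecutive g (Nat.zero_le 2) (by omega : 2 ≤ B + 2),
    Finset.sum_Ico_eq_sum_range, Finset.sum_range_succ, Finset.sum_range_one]
  rfl

theorem sum_taylor_eq_of_helmholtz (hs : IsOpen s) (ha : ContDiffOn ℝ ∞ a s)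
    (hk : ContDiffOn ℝ ∞ k s) (hf : ContDiffOn ℝ ∞ f s) (hane : ∀ x ∈ s, a x ≠ 0)
    (hu : ContDiffOn ℝ ∞ u s)
    (hode : ∀ x ∈ s, deriv (fun y => (a y : ℂ) * deriv u y) x + k x * u x = f x)
    {xb : ℝ} (hxb : xb ∈ s) (B : ℕ) (h : ℝ) :
    ∑ n ∈ Finset.range (B + 2), (h ^ n / n.factorial) • iteratedDeriv n u xb
      = u xb * EPoly0 a k xb (B + 1) h + deriv u xb * h * EPoly1 a k xb (B + 1) h
        + ∑ ℓ ∈ Finset.range B, iteratedDeriv ℓ f xb * h ^ (ℓ + 2) * FPoly a k xb ℓ (B + 1) h := by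
  have hhigher : ∀ j ∈ Finset.Icc 2 (B + 1), (h ^ j / j.factorial) • iteratedDeriv j u xb
      = u xb * (Ej0 a k j xb * h ^ j / j.factorial)
        + deriv u xb * h * (Ej1 a k j xb * h ^ (j - 1) / j.factorial)
        + ∑ ℓ ∈ Finset.range (j - 1),
            iteratedDeriv ℓ f xb * h ^ (ℓ + 2)
              * (Fjl a k j ℓ xb * h ^ (j - ℓ - 2) / j.factorial) := by
    intro j hj
    obtain ⟨n, rfl⟩ : ∃ n, j = n + 2 := ⟨j - 2, by grind⟩
    have hpow : ∀ ℓ ∈ Finset.range (n + 1), (h : ℂ) ^ (n + 2) = h ^ (ℓ + 2) * h ^ (n - ℓ) :=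
      fun ℓ hℓ => by rw [← pow_add]; grind
    rw [iteratedDeriv_add_two_eq_of_helmholtz hs ha hk hf hane hu hode n xb hxb, Complex.real_smul]
    simp only [Ej0, Ej1, Fjl, show n + 2 - 2 = n by omega, show n + 2 - 1 = n + 1 by omega,
      show ∀ ℓ, n + 2 - ℓ - 2 = n - ℓ by omega]
    push_cast
    rw [mul_add, mul_add, Finset.mul_sum]
    congr 1
    · ring
    · exact Finset.sum_congr rfl fun ℓ hℓ => by rw [hpow ℓ hℓ]; ring
  have hswap : ∑ j ∈ Finset.Icc 2 (B + 1), ∑ ℓ ∈ Finset.range (j - 1),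
        iteratedDeriv ℓ f xb * h ^ (ℓ + 2) * (Fjl a k j ℓ xb * h ^ (j - ℓ - 2) / j.factorial)
      = ∑ ℓ ∈ Finset.range B, iteratedDeriv ℓ f xb * h ^ (ℓ + 2) * FPoly a k xb ℓ (B + 1) h := by
    rw [Finset.sum_comm' (t' := Finset.range B) (s' := fun ℓ => Finset.Icc (ℓ + 2) (B + 1))
      (fun j ℓ => by simp only [Finset.mem_Icc, Finset.mem_range]; omega)]
    simp only [FPoly, Finset.mul_sum]
  rw [sum_range_add_two_eq, Finset.sum_congr rfl hhigher, Finset.sum_add_distrib,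
    Finset.sum_add_distrib, hswap, EPoly0, EPoly1, ← Finset.mul_sum, ← Finset.mul_sum]
  simp only [iteratedDeriv_zero, iteratedDeriv_one, Complex.real_smul]
  push_cast
  ring

theorem exists_expansion_of_helmholtz (hs : IsOpen s) (hconv : Convex ℝ s)
    (ha : ContDiffOn ℝ ∞ a s) (hk : ContDiffOn ℝ ∞ k s) (hf : ContDiffOn ℝ ∞ f s)
    (hane : ∀ x ∈ s, a x ≠ 0) (hu : ContDiffOn ℝ ∞ u s)
    (hode : ∀ x ∈ s, deriv (fun y => (a y : ℂ) * deriv u y) x + k x * u x = f x)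
    {xb : ℝ} (hxb : xb ∈ s) (B : ℕ) :
    ∃ R : ℝ → ℂ, R =O[𝓝 0] (fun h => h ^ (B + 2)) ∧ ∀ h : ℝ,
      u (xb + h) = u xb * EPoly0 a k xb (B + 1) h + deriv u xb * h * EPoly1 a k xb (B + 1) h
        + ∑ ℓ ∈ Finset.range B, iteratedDeriv ℓ f xb * h ^ (ℓ + 2) * FPoly a k xb ℓ (B + 1) h
        + R h :=
  ⟨_, isBigO_sub_taylor_sum hs hconv hxb hu (B + 1), fun h => by
    rw [← sum_taylor_eq_of_helmholtz hs ha hk hf hane hu hode hxb B h, add_sub_cancel]⟩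

end Helmholtz

theorem isBigO_one_of_exists_continuousOn {α E : Type*} [TopologicalSpace α]
    [NormedAddCommGroup E] {g : α → E} {x : α} (hg : ∃ U ∈ 𝓝 x, ContinuousOn g U) :
    g =O[𝓝 x] fun _ => (1 : ℝ) := by
  obtain ⟨U, hU, hgU⟩ := hg
  exact (hgU.continuousAt hU).tendsto.isBigO_one ℝ

theorem isBigO_pow_of_le {𝕜 : Type*} [NormedField 𝕜] {m n : ℕ} (hmn : m ≤ n) :
    (fun x : 𝕜 => x ^ n) =O[𝓝 0] fun x => x ^ m := by
  rcases hmn.eq_or_lt with rfl | hlt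
  · exact isBigO_refl _ _
  · exact (isLittleO_pow_pow hlt).isBigO

theorem isBigO_ofReal_pow (m : ℕ) : (fun h : ℝ => (h : ℂ) ^ m) =O[𝓝 0] fun h => h ^ m :=
  isBigO_of_le _ fun h => by rw [norm_pow, norm_pow, Complex.norm_real]

theorem Asymptotics.IsBigO.comp_neg_pow {E : Type*} [NormedAddCommGroup E] {g : ℝ → E} {e : ℕ}
    (hg : g =O[𝓝 0] fun h => h ^ e) : (fun h => g (-h)) =O[𝓝 0] fun h => h ^ e :=
  (hg.comp_tendsto (continuous_neg.tendsto' 0 0 neg_zero)).trans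
    (isBigO_of_le _ fun h => by simp)

theorem Asymptotics.IsBigO.ofReal_pow_mul {g : ℝ → ℂ} {m e n : ℕ}
    (hg : g =O[𝓝 0] fun h => h ^ e) (hn : n ≤ m + e) :
    (fun h : ℝ => (h : ℂ) ^ m * g h) =O[𝓝 0] fun h => h ^ n :=
  (((isBigO_ofReal_pow m).mul hg).congr_right fun h => (pow_add h m e).symm).trans
    (isBigO_pow_of_le hn)

section Stencil

variable {a : ℝ → ℝ} {k : ℝ → ℂ} {xb : ℝ}

theorem continuous_FPoly (ℓ B : ℕ) : Continuous (FPoly a k xb ℓ B) := by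
  unfold FPoly
  fun_prop

theorem FPoly_sub_FPoly_isBigO {ℓ B B' : ℕ} (hℓ : ℓ + 1 ≤ B') (hB : B' ≤ B) :
    (fun h => FPoly a k xb ℓ (B + 1) h - FPoly a k xb ℓ (B' + 1) h)
      =O[𝓝 0] fun h => h ^ (B' - ℓ) := by
  have hIoc : ∀ n, Finset.Icc (ℓ + 2) n = Finset.Ioc (ℓ + 1) n := fun n => by
    ext j; simp only [Finset.mem_Icc, Finset.mem_Ioc]; omega
  have htail : ∀ h : ℝ, FPoly a k xb ℓ (B + 1) h - FPoly a k xb ℓ (B' + 1) h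
      = ∑ j ∈ Finset.Ioc (B' + 1) (B + 1),
          Fjl a k j ℓ xb / j.factorial * (h : ℂ) ^ (j - ℓ - 2) := by
    intro h
    rw [FPoly, FPoly, hIoc, hIoc, ← Finset.sum_Ioc_consecutive _ (by omega : ℓ + 1 ≤ B' + 1)
      (by omega : B' + 1 ≤ B + 1), add_sub_cancel_left]
    exact Finset.sum_congr rfl fun j _ => by ring
  refine (IsBigO.fun_sum fun j hj => ?_).congr_left fun h => (htail h).symm
  have hj : B' - ℓ ≤ j - ℓ - 2 := by simp only [Finset.mem_Ioc] at hj; omega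
  exact ((isBigO_ofReal_pow _).trans (isBigO_pow_of_le hj)).const_mul_left _

variable {c1 cm1 : ℝ → ℂ}

theorem isBigO_low_order_term {d : ℝ → ℂ} {ℓ Mt M : ℕ} (hℓ : ℓ < Mt) (hMMt : Mt ≤ M)
    (hc1 : c1 =O[𝓝 0] fun _ => (1 : ℝ)) (hcm1 : cm1 =O[𝓝 0] fun _ => (1 : ℝ))
    (hd : (fun h : ℝ => d h + (if ℓ = 0 then 1 else 0) - c1 h * FPoly a k xb ℓ (Mt + 1) h
        - (-1 : ℂ) ^ ℓ * cm1 h * FPoly a k xb ℓ (Mt + 1) (-h)) =O[𝓝 0] fun h => h ^ (Mt - ℓ)) :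
    (fun h : ℝ => (h : ℂ) ^ (ℓ + 2) * (c1 h * FPoly a k xb ℓ (M + 1) h
        + (-1 : ℂ) ^ ℓ * cm1 h * FPoly a k xb ℓ (M + 1) (-h) - d h - (if ℓ = 0 then 1 else 0)))
      =O[𝓝 0] fun h => h ^ (Mt + 2) := by
  have htail := FPoly_sub_FPoly_isBigO (a := a) (k := k) (xb := xb) (by omega : ℓ + 1 ≤ Mt) hMMt
  have hright := (hc1.mul htail).congr_right fun h => one_mul _
  have hleft := ((hcm1.mul htail.comp_neg_pow).congr_right fun h => one_mul _).const_mul_left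
    ((-1 : ℂ) ^ ℓ)
  refine ((hd.neg_left.add hright).add hleft |>.congr_left fun h => by ring).ofReal_pow_mul
    (by omega)

theorem isBigO_high_order_term {ℓ Mt B : ℕ} (hℓ : Mt ≤ ℓ)
    (hc1 : c1 =O[𝓝 0] fun _ => (1 : ℝ)) (hcm1 : cm1 =O[𝓝 0] fun _ => (1 : ℝ)) :
    (fun h : ℝ => (h : ℂ) ^ (ℓ + 2) * (c1 h * FPoly a k xb ℓ B h
        + (-1 : ℂ) ^ ℓ * cm1 h * FPoly a k xb ℓ B (-h))) =O[𝓝 0] fun h => h ^ (Mt + 2) := by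
  have hF := (continuous_FPoly (a := a) (k := k) (xb := xb) ℓ B).tendsto 0 |>.isBigO_one ℝ
  have hFneg := ((continuous_FPoly (a := a) (k := k) (xb := xb) ℓ B).comp continuous_neg).tendsto 0
    |>.isBigO_one ℝ
  have hbounded : (fun h => c1 h * FPoly a k xb ℓ B h
      + (-1 : ℂ) ^ ℓ * cm1 h * FPoly a k xb ℓ B (-h)) =O[𝓝 0] fun h : ℝ => h ^ 0 :=
    ((hc1.mul hF).add ((hcm1.mul hFneg).const_mul_left ((-1 : ℂ) ^ ℓ))).congr
      (fun h => by simp only [Function.comp, mul_assoc]) fun h => by rw [one_mul, pow_zero]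
  exact hbounded.ofReal_pow_mul (by omega)

end Stencil

theorem stencil_eq_of_expansion {U R P₀ P₁ : ℝ → ℂ} {Q : ℕ → ℝ → ℂ} {u₀ u₁ : ℂ} {φ : ℕ → ℂ}
    {M : ℕ} (hU : ∀ h : ℝ, U h = u₀ * P₀ h + u₁ * h * P₁ h
      + ∑ ℓ ∈ Finset.range M, φ ℓ * h ^ (ℓ + 2) * Q ℓ h + R h)
    (cm1 c0 c1 : ℝ → ℂ) (h : ℝ) :
    cm1 h * U (-h) + c0 h * u₀ + c1 h * U h
      = u₀ * (c0 h + c1 h * P₀ h + cm1 h * P₀ (-h)) + u₁ * (h * (c1 h * P₁ h - cm1 h * P₁ (-h)))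
        + ∑ ℓ ∈ Finset.range M,
            φ ℓ * ((h : ℂ) ^ (ℓ + 2) * (c1 h * Q ℓ h + (-1) ^ ℓ * cm1 h * Q ℓ (-h)))
        + (c1 h * R h + cm1 h * R (-h)) := by
  have hsum : ∑ ℓ ∈ Finset.range M,
        φ ℓ * ((h : ℂ) ^ (ℓ + 2) * (c1 h * Q ℓ h + (-1) ^ ℓ * cm1 h * Q ℓ (-h)))
      = c1 h * ∑ ℓ ∈ Finset.range M, φ ℓ * h ^ (ℓ + 2) * Q ℓ h
        + cm1 h * ∑ ℓ ∈ Finset.range M, φ ℓ * ((-h : ℝ) : ℂ) ^ (ℓ + 2) * Q ℓ (-h) := by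
    rw [Finset.mul_sum, Finset.mul_sum, ← Finset.sum_add_distrib]
    refine Finset.sum_congr rfl fun ℓ _ => ?_
    push_cast
    ring
  rw [hU, hU, hsum]
  push_cast
  ring

theorem sum_sub_kronecker_eq {M Mt : ℕ} (hMt : 0 < Mt) (hMMt : Mt ≤ M) (φ G D : ℕ → ℂ) (z : ℂ) :
    ∑ ℓ ∈ Finset.range M, φ ℓ * (z ^ (ℓ + 2) * G ℓ)
        - z ^ 2 * ∑ ℓ ∈ Finset.range Mt, D ℓ * z ^ ℓ * φ ℓ - z ^ 2 * φ 0
      = ∑ ℓ ∈ Finset.range Mt, φ ℓ * (z ^ (ℓ + 2) * (G ℓ - D ℓ - if ℓ = 0 then 1 else 0))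
        + ∑ ℓ ∈ Finset.Ico Mt M, φ ℓ * (z ^ (ℓ + 2) * G ℓ) := by
  have hkron :
      ∑ ℓ ∈ Finset.range Mt, φ ℓ * z ^ (ℓ + 2) * (if ℓ = 0 then 1 else 0) = z ^ 2 * φ 0 := by
    rw [Finset.sum_eq_single_of_mem 0 (Finset.mem_range.mpr hMt) fun ℓ _ hℓ => by simp [hℓ]]
    simp [mul_comm]
  have hlow : ∑ ℓ ∈ Finset.range Mt, φ ℓ * (z ^ (ℓ + 2) * (G ℓ - D ℓ - if ℓ = 0 then 1 else 0))
      = ∑ ℓ ∈ Finset.range Mt, φ ℓ * (z ^ (ℓ + 2) * G ℓ)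
        - ∑ ℓ ∈ Finset.range Mt, z ^ 2 * (D ℓ * z ^ ℓ * φ ℓ)
        - ∑ ℓ ∈ Finset.range Mt, φ ℓ * z ^ (ℓ + 2) * (if ℓ = 0 then 1 else 0) := by
    rw [← Finset.sum_sub_distrib, ← Finset.sum_sub_distrib]
    exact Finset.sum_congr rfl fun ℓ _ => by ring
  rw [← Finset.sum_range_add_sum_Ico _ hMMt, ← hkron, Finset.mul_sum, hlow]
  ring

theorem compact_stencil_accuracy_order_general
    (p q : ℝ) (a : ℝ → ℝ) (k f : ℝ → ℂ)
    (ha : ContDiffOn ℝ (⊤ : ℕ∞) a (Set.Ioo p q))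
    (hk : ContDiffOn ℝ (⊤ : ℕ∞) k (Set.Ioo p q))
    (hf : ContDiffOn ℝ (⊤ : ℕ∞) f (Set.Ioo p q))
    (hapos : ∀ x ∈ Set.Ioo p q, 0 < a x)
    (xb : ℝ) (hxb : xb ∈ Set.Ioo p q) (M Mt : ℕ) (hMt : 1 ≤ Mt) (hMMt : Mt ≤ M)
    (α cm1 c0 c1 : ℝ → ℂ) (d : ℕ → ℝ → ℂ)
    (hcm1cont : ∃ U ∈ 𝓝 (0 : ℝ), ContinuousOn cm1 U)
    (hc1cont : ∃ U ∈ 𝓝 (0 : ℝ), ContinuousOn c1 U)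
    (hc1 : (fun h : ℝ => c1 h * EPoly1 a k xb (M + 1) h - α h)
      =O[𝓝 (0 : ℝ)] fun h : ℝ => h ^ (M + 1))
    (hcm1 : (fun h : ℝ => cm1 h * EPoly1 a k xb (M + 1) (-h) - α h)
      =O[𝓝 (0 : ℝ)] fun h : ℝ => h ^ (M + 1))
    (hc0 : (fun h : ℝ => c0 h + c1 h * EPoly0 a k xb (M + 1) h + cm1 h * EPoly0 a k xb (M + 1) (-h))
      =O[𝓝 (0 : ℝ)] fun h : ℝ => h ^ (M + 2))
    (hd : ∀ ℓ < Mt,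
      (fun h : ℝ => d ℓ h + (if ℓ = 0 then 1 else 0)
          - c1 h * FPoly a k xb ℓ (Mt + 1) h
          - (-1 : ℂ) ^ ℓ * cm1 h * FPoly a k xb ℓ (Mt + 1) (-h))
        =O[𝓝 (0 : ℝ)] fun h : ℝ => h ^ (Mt - ℓ)) :
    ∀ u : ℝ → ℂ, ContDiffOn ℝ (⊤ : ℕ∞) u (Set.Ioo p q) →
      (∀ x ∈ Set.Ioo p q, deriv (fun y => (a y : ℂ) * deriv u y) x + k x * u x = f x) →
      (fun h : ℝ => cm1 h * u (xb - h) + c0 h * u xb + c1 h * u (xb + h)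
          - (h : ℂ) ^ 2 * ∑ ℓ ∈ Finset.range Mt, d ℓ h * (h : ℂ) ^ ℓ * iteratedDeriv ℓ f xb
          - (h : ℂ) ^ 2 * f xb)
        =O[𝓝 (0 : ℝ)] fun h : ℝ => h ^ (Mt + 2) := by
  intro u hu hode
  obtain ⟨R, hR, hexp⟩ := exists_expansion_of_helmholtz isOpen_Ioo (convex_Ioo p q) ha hk hf
    (fun x hx => (hapos x hx).ne') hu hode hxb M
  have hc1b := isBigO_one_of_exists_continuousOn hc1cont
  have hcm1b := isBigO_one_of_exists_continuousOn hcm1cont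
  have hvalue := (hc0.const_mul_left (u xb)).trans (isBigO_pow_of_le (by omega : Mt + 2 ≤ M + 2))
  have hsymm : (fun h : ℝ => c1 h * EPoly1 a k xb (M + 1) h - cm1 h * EPoly1 a k xb (M + 1) (-h))
      =O[𝓝 0] fun h => h ^ (M + 1) := (hc1.sub hcm1).congr_left fun h => by ring
  have hslope : (fun h : ℝ => deriv u xb * (h * (c1 h * EPoly1 a k xb (M + 1) h
      - cm1 h * EPoly1 a k xb (M + 1) (-h)))) =O[𝓝 0] fun h => h ^ (Mt + 2) :=
    ((hsymm.ofReal_pow_mul (m := 1) (by omega)).congr_left fun h => by rw [pow_one]).const_mul_left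
      (deriv u xb)
  have hlow := IsBigO.fun_sum fun ℓ hℓ => (isBigO_low_order_term (Finset.mem_range.mp hℓ) hMMt
    hc1b hcm1b (hd ℓ (Finset.mem_range.mp hℓ))).const_mul_left (iteratedDeriv ℓ f xb)
  have hhigh := IsBigO.fun_sum (s := Finset.Ico Mt M) fun ℓ hℓ =>
    (isBigO_high_order_term (a := a) (k := k) (xb := xb) (B := M + 1) (Finset.mem_Ico.mp hℓ).1
      hc1b hcm1b).const_mul_left (iteratedDeriv ℓ f xb)
  have hrem := (((hc1b.mul hR).add (hcm1b.mul hR.comp_neg_pow)).congr_right fun h =>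
    one_mul _).trans (isBigO_pow_of_le (by omega : Mt + 2 ≤ M + 2))
  refine ((((hvalue.add hslope).add hlow).add hhigh).add hrem).congr_left fun h => ?_
  have hsplit := sum_sub_kronecker_eq hMt hMMt (fun ℓ => iteratedDeriv ℓ f xb)
    (fun ℓ => c1 h * FPoly a k xb ℓ (M + 1) h + (-1) ^ ℓ * cm1 h * FPoly a k xb ℓ (M + 1) (-h))
    (fun ℓ => d ℓ h) (h : ℂ)
  simp only [iteratedDeriv_zero] at hsplit
  rw [sub_eq_add_neg xb h, stencil_eq_of_expansion hexp]
  linear_combination -hsplit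

/-- Theorem 3.2, accuracy part.  Under the conditions (3.6) and (3.7)
on the stencil coefficients `c₋₁, c₀, c₁` and `d₀, …, d_{M̃-1}`, the compact finite
difference scheme has accuracy order `M̃` at the base point `x_b`: for every smooth
solution `u` of `(a u')' + k u = f` on `I`, the (`h²`-scaled) local truncation error is
`O(h^{M̃+2})` as `h → 0`. -/
theorem compact_stencil_accuracy_order
    (p q : ℝ) (a : ℝ → ℝ) (k f : ℝ → ℂ)
    (ha : ContDiffOn ℝ (⊤ : ℕ∞) a (Set.Ioo p q))
    (hk : ContDiffOn ℝ (⊤ : ℕ∞) k (Set.Ioo p q))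
    (hf : ContDiffOn ℝ (⊤ : ℕ∞) f (Set.Ioo p q))
    (hapos : ∀ x ∈ Set.Ioo p q, 0 < a x)
    (xb : ℝ) (hxb : xb ∈ Set.Ioo p q) (M Mt : ℕ) (hMt : 1 ≤ Mt) (hMMt : Mt ≤ M) (hM : 2 ≤ M)
    (α cm1 c0 c1 : ℝ → ℂ) (d : ℕ → ℝ → ℂ)
    (hαcont : ∃ U ∈ 𝓝 (0 : ℝ), ContinuousOn α U)
    (hcm1cont : ∃ U ∈ 𝓝 (0 : ℝ), ContinuousOn cm1 U)
    (hc0cont : ∃ U ∈ 𝓝 (0 : ℝ), ContinuousOn c0 U)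
    (hc1cont : ∃ U ∈ 𝓝 (0 : ℝ), ContinuousOn c1 U)
    (hdcont : ∀ ℓ < Mt, ∃ U ∈ 𝓝 (0 : ℝ), ContinuousOn (d ℓ) U)
    (hα0 : α 0 ≠ 0)
    (hc1 : (fun h : ℝ => c1 h * EPoly1 a k xb (M + 1) h - α h)
      =O[𝓝 (0 : ℝ)] fun h : ℝ => h ^ (M + 1))
    (hcm1 : (fun h : ℝ => cm1 h * EPoly1 a k xb (M + 1) (-h) - α h)
      =O[𝓝 (0 : ℝ)] fun h : ℝ => h ^ (M + 1))
    (hc0 : (fun h : ℝ => c0 h + c1 h * EPoly0 a k xb (M + 1) h + cm1 h * EPoly0 a k xb (M + 1) (-h))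
      =O[𝓝 (0 : ℝ)] fun h : ℝ => h ^ (M + 2))
    (hd : ∀ ℓ < Mt,
      (fun h : ℝ => d ℓ h + (if ℓ = 0 then 1 else 0)
          - c1 h * FPoly a k xb ℓ (Mt + 1) h
          - (-1 : ℂ) ^ ℓ * cm1 h * FPoly a k xb ℓ (Mt + 1) (-h))
        =O[𝓝 (0 : ℝ)] fun h : ℝ => h ^ (Mt - ℓ)) :
    ∀ u : ℝ → ℂ, ContDiffOn ℝ (⊤ : ℕ∞) u (Set.Ioo p q) →
      (∀ x ∈ Set.Ioo p q, deriv (fun y => (a y : ℂ) * deriv u y) x + k x * u x = f x) →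
      (fun h : ℝ => cm1 h * u (xb - h) + c0 h * u xb + c1 h * u (xb + h)
          - (h : ℂ) ^ 2 * ∑ ℓ ∈ Finset.range Mt, d ℓ h * (h : ℂ) ^ ℓ * iteratedDeriv ℓ f xb
          - (h : ℂ) ^ 2 * f xb)
        =O[𝓝 (0 : ℝ)] fun h : ℝ => h ^ (Mt + 2) :=
  compact_stencil_accuracy_order_general p q a k f ha hk hf hapos xb hxb M Mt hMt hMMt α cm1 c0 c1 d
    hcm1cont hc1cont hc1 hcm1 hc0 hd
end

section
/- Let x_b ∈ I, let M ≥ 1 be an integer, let λ_0, λ_1 ∈ ℂ, and let c_0, c_1 : ℝ → ℂ be continuous on a neighborhood of 0. Assume that, as h → 0: c_1(h)·𝔈_1(h) − λ_1 = O(h^M) and c_0(h) − h·λ_0 + c_1(h)·𝔈_0(h) = O(h^{M+1}). Then for every infinitely differentiable u : I → ℂ satisfying (a u')' + k u = 0 at every x ∈ I with x ≥ x_b, one has, as h → 0⁺: c_0(h)·u(x_b) + c_1(h)·u(x_b + h) − h·(λ_0·u(x_b) + λ_1·u'(x_b)) = O(h^{M+1}); equivalently, the one-sided two-point boundary stencil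 h^{−1}[c_0(h)u(x_b) + c_1(h)u(x_b+h)] approximates the boundary functional B u := λ_0 u(x_b) + λ_1 u'(x_b) to order M for every solution of the homogeneous equation. -/
/-!
To the right of `x_b` the equation reads `u'' = E_{2,0} u + E_{2,1} u'`; differentiating it and
substituting it back is exactly the recursion defining `E_{j,0}, E_{j,1}`, so
`u^{(j)} = E_{j,0} u + E_{j,1} u'` there, and at `x_b` by right-continuity. Hence the Taylor
polynomial of degree `M + 1` of `u` at `x_b` is `u(x_b) 𝔈₀(h) + u'(x_b) h 𝔈₁(h)`, and the stencil
minus `h B u` equals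
`u(x_b) (c₀ - h λ₀ + c₁ 𝔈₀) + u'(x_b) h (c₁ 𝔈₁ - λ₁) + c₁ (u(x_b + h) - Taylor polynomial)`,
a sum of three `O(h^{M+1})` terms since `c₁` is bounded near `0`.
-/

open Filter Topology Asymptotics

open scoped ContDiff Nat

section ODE

variable {s : Set ℝ} {a : ℝ → ℝ} {k u : ℝ → ℂ}

theorem contDiffOn_ecoef (hs : IsOpen s) (ha : ContDiffOn ℝ ∞ a s) (hk : ContDiffOn ℝ ∞ k s)
    (ha0 : ∀ x ∈ s, a x ≠ 0) (n : ℕ) :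
    ContDiffOn ℝ ∞ (Ecoef a k n).1 s ∧ ContDiffOn ℝ ∞ (Ecoef a k n).2 s := by
  have hA : ContDiffOn ℝ ∞ (fun x => (a x : ℂ)) s :=
    Complex.ofRealCLM.contDiff.comp_contDiffOn ha
  have hA' : ContDiffOn ℝ ∞ (fun x => ((deriv a x : ℝ) : ℂ)) s :=
    Complex.ofRealCLM.contDiff.comp_contDiffOn (ha.deriv_of_isOpen hs (by simp))
  have hA0 : ∀ x ∈ s, (a x : ℂ) ≠ 0 := fun x hx => Complex.ofReal_ne_zero.2 (ha0 x hx)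
  have hkA := hk.mul (hA.inv hA0)
  have hA'A := hA'.mul (hA.inv hA0)
  induction n with
  | zero =>
    simp only [Ecoef, div_eq_mul_inv, neg_mul]
    exact ⟨hkA.neg, hA'A.neg⟩
  | succ n ih =>
    simp only [Ecoef, div_eq_mul_inv]
    exact ⟨(ih.1.deriv_of_isOpen hs (by simp)).sub (hkA.mul ih.2),
      (ih.1.add (ih.2.deriv_of_isOpen hs (by simp))).sub (hA'A.mul ih.2)⟩

theorem deriv_deriv_eq_ecoef_zero (hs : IsOpen s) (ha : ContDiffOn ℝ ∞ a s)
    (ha0 : ∀ x ∈ s, a x ≠ 0) (hu : ContDiffOn ℝ ∞ u s)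
    (hODE : ∀ x ∈ s, deriv (fun y => (a y : ℂ) * deriv u y) x + k x * u x = 0)
    {x : ℝ} (hx : x ∈ s) :
    deriv (deriv u) x = (Ecoef a k 0).1 x * u x + (Ecoef a k 0).2 x * deriv u x := by
  have hax : HasDerivAt (fun y => (a y : ℂ)) ((deriv a x : ℝ) : ℂ) x :=
    ((ha.differentiableOn (by simp) x hx).differentiableAt (hs.mem_nhds hx)).hasDerivAt.ofReal_comp
  have hu' : ContDiffOn ℝ ∞ (deriv u) s := hu.deriv_of_isOpen hs (by simp)
  have hu'x : HasDerivAt (deriv u) (deriv (deriv u) x) x :=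
    ((hu'.differentiableOn (by simp) x hx).differentiableAt (hs.mem_nhds hx)).hasDerivAt
  have hode := hODE x hx
  rw [(hax.fun_mul hu'x).deriv] at hode
  have hA0 : (a x : ℂ) ≠ 0 := Complex.ofReal_ne_zero.2 (ha0 x hx)
  simp only [Ecoef]
  field_simp
  linear_combination hode

theorem iteratedDeriv_add_two_eqOn_ecoef (hs : IsOpen s) (ha : ContDiffOn ℝ ∞ a s)
    (hk : ContDiffOn ℝ ∞ k s) (ha0 : ∀ x ∈ s, a x ≠ 0) (hu : ContDiffOn ℝ ∞ u s)
    (hODE : ∀ x ∈ s, deriv (fun y => (a y : ℂ) * deriv u y) x + k x * u x = 0) (n : ℕ) :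
    Set.EqOn (iteratedDeriv (n + 2) u)
      (fun x => (Ecoef a k n).1 x * u x + (Ecoef a k n).2 x * deriv u x) s := by
  induction n with
  | zero =>
    intro x hx
    rw [iteratedDeriv_succ, iteratedDeriv_one]
    exact deriv_deriv_eq_ecoef_zero hs ha ha0 hu hODE hx
  | succ n ih =>
    intro x hx
    have hdiff : ∀ {f : ℝ → ℂ}, ContDiffOn ℝ ∞ f s → DifferentiableAt ℝ f x := fun hf =>
      (hf.differentiableOn (by simp) x hx).differentiableAt (hs.mem_nhds hx)
    obtain ⟨hE0, hE1⟩ := contDiffOn_ecoef hs ha hk ha0 n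
    have hu' : ContDiffOn ℝ ∞ (deriv u) s := hu.deriv_of_isOpen hs (by simp)
    rw [iteratedDeriv_succ, (Filter.eventuallyEq_of_mem (hs.mem_nhds hx) ih).deriv_eq,
      deriv_fun_add ((hdiff hE0).fun_mul (hdiff hu)) ((hdiff hE1).fun_mul (hdiff hu')),
      deriv_fun_mul (hdiff hE0) (hdiff hu), deriv_fun_mul (hdiff hE1) (hdiff hu'),
      deriv_deriv_eq_ecoef_zero hs ha ha0 hu hODE hx]
    have hA0 : (a x : ℂ) ≠ 0 := Complex.ofReal_ne_zero.2 (ha0 x hx)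
    simp only [Ecoef]
    field_simp
    ring

/-- At `xb` itself the identity comes from the open set `Ioi xb ∩ s` by right-continuity. -/
theorem iteratedDeriv_add_two_eq_ecoef_of_ode_right (hs : IsOpen s) (ha : ContDiffOn ℝ ∞ a s)
    (hk : ContDiffOn ℝ ∞ k s) (ha0 : ∀ x ∈ s, a x ≠ 0) (hu : ContDiffOn ℝ ∞ u s)
    {xb : ℝ} (hxb : xb ∈ s)
    (hODE : ∀ x ∈ s, xb ≤ x → deriv (fun y => (a y : ℂ) * deriv u y) x + k x * u x = 0)
    (n : ℕ) :
    iteratedDeriv (n + 2) u xb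
      = (Ecoef a k n).1 xb * u xb + (Ecoef a k n).2 xb * deriv u xb := by
  have hs' : IsOpen (Set.Ioi xb ∩ s) := isOpen_Ioi.inter hs
  have hsub : Set.Ioi xb ∩ s ⊆ s := Set.inter_subset_right
  have hEq := iteratedDeriv_add_two_eqOn_ecoef hs' (ha.mono hsub) (hk.mono hsub)
    (fun x hx => ha0 x hx.2) (hu.mono hsub) (fun x hx => hODE x hx.2 (le_of_lt hx.1)) n
  have hcont : ∀ {f : ℝ → ℂ}, ContDiffOn ℝ ∞ f s → ContinuousAt f xb := fun hf =>
    hf.continuousOn.continuousAt (hs.mem_nhds hxb)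
  have hiter : ContinuousAt (iteratedDeriv (n + 2) u) xb :=
    ((hu.continuousOn_iteratedDerivWithin (WithTop.coe_le_coe.2 le_top) hs.uniqueDiffOn).congr
      (iteratedDerivWithin_of_isOpen hs).symm).continuousAt (hs.mem_nhds hxb)
  obtain ⟨hE0, hE1⟩ := contDiffOn_ecoef hs ha hk ha0 n
  refine tendsto_nhds_unique_of_eventuallyEq (l := 𝓝[>] xb)
    (hiter.tendsto.mono_left nhdsWithin_le_nhds)
    ((((hcont hE0).mul (hcont hu)).add
      ((hcont hE1).mul (hcont (hu.deriv_of_isOpen hs (by simp))))).tendsto.mono_left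
        nhdsWithin_le_nhds) ?_
  exact Filter.eventually_of_mem (inter_mem_nhdsWithin _ (hs.mem_nhds hxb)) hEq

end ODE

section Taylor

variable {a : ℝ → ℝ} {k u : ℝ → ℂ} {xb : ℝ}

theorem EPoly0_succ {N : ℕ} (hN : 1 ≤ N) (h : ℝ) :
    EPoly0 a k xb (N + 1) h
      = EPoly0 a k xb N h + Ej0 a k (N + 1) xb * (h : ℂ) ^ (N + 1) / ((N + 1)! : ℂ) := by
  rw [EPoly0, EPoly0, Finset.sum_Icc_succ_top (by omega), add_assoc]

theorem EPoly1_succ {N : ℕ} (hN : 1 ≤ N) (h : ℝ) :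
    EPoly1 a k xb (N + 1) h
      = EPoly1 a k xb N h + Ej1 a k (N + 1) xb * (h : ℂ) ^ N / ((N + 1)! : ℂ) := by
  rw [EPoly1, EPoly1, Finset.sum_Icc_succ_top (by omega), add_assoc, Nat.add_sub_cancel]

theorem sum_taylor_terms_eq_epoly
    (hE : ∀ n, iteratedDeriv (n + 2) u xb
      = (Ecoef a k n).1 xb * u xb + (Ecoef a k n).2 xb * deriv u xb) (N : ℕ) (h : ℝ) :
    ∑ j ∈ Finset.range (N + 2), ((j ! : ℝ)⁻¹ * h ^ j) • iteratedDeriv j u xb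
      = u xb * EPoly0 a k xb (N + 1) h + deriv u xb * ((h : ℂ) * EPoly1 a k xb (N + 1) h) := by
  induction N with
  | zero => simp [EPoly0, EPoly1, Finset.sum_range_succ]; ring
  | succ N ih =>
    rw [Finset.sum_range_succ, ih, hE N, EPoly0_succ (N := N + 1) (by omega),
      EPoly1_succ (N := N + 1) (by omega)]
    simp only [Ej0, Ej1, Complex.real_smul]
    push_cast
    field_simp
    ring

theorem isLittleO_sub_epoly {s : Set ℝ} (hs : IsOpen s) (hs' : Convex ℝ s)
    (hu : ContDiffOn ℝ ∞ u s) (hxb : xb ∈ s)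
    (hE : ∀ n, iteratedDeriv (n + 2) u xb
      = (Ecoef a k n).1 xb * u xb + (Ecoef a k n).2 xb * deriv u xb) (N : ℕ) :
    (fun h : ℝ => u (xb + h)
        - (u xb * EPoly0 a k xb (N + 1) h + deriv u xb * ((h : ℂ) * EPoly1 a k xb (N + 1) h)))
      =o[𝓝 0] fun h : ℝ => h ^ (N + 1) := by
  have htaylor := taylor_isLittleO (n := N + 1) hs' hxb (hu.of_le (WithTop.coe_le_coe.2 le_top))
  rw [nhdsWithin_eq_nhds.2 (hs.mem_nhds hxb)] at htaylor
  have hshift : Tendsto (fun h : ℝ => xb + h) (𝓝 0) (𝓝 xb) :=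
    (continuous_const_add xb).tendsto' 0 xb (add_zero xb)
  refine (htaylor.comp_tendsto hshift).congr (fun h => ?_) fun _ => by simp
  simp only [Function.comp_apply, taylor_within_apply, add_sub_cancel_left,
    iteratedDerivWithin_of_isOpen hs hxb, sum_taylor_terms_eq_epoly hE]

end Taylor

theorem isBigO_sub_add_mul_EPoly0_succ {l : Filter ℝ} {a : ℝ → ℝ} {k c0 c1 : ℝ → ℂ}
    {xb : ℝ} {lam0 : ℂ} {M : ℕ} (hM : 1 ≤ M) (hc1b : c1 =O[l] fun _ => (1 : ℝ))
    (hc0 : (fun h : ℝ => c0 h - h * lam0 + c1 h * EPoly0 a k xb M h) =O[l] fun h => h ^ (M + 1)) :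
    (fun h : ℝ => c0 h - h * lam0 + c1 h * EPoly0 a k xb (M + 1) h)
      =O[l] fun h => h ^ (M + 1) := by
  have hpow : (fun h : ℝ => (h : ℂ) ^ (M + 1)) =O[l] fun h => h ^ (M + 1) :=
    isBigO_of_le l fun h => by simp
  have hterm := (hc1b.mul hpow).const_mul_left (Ej0 a k (M + 1) xb / ((M + 1)! : ℂ))
  refine (hc0.add (by simpa using hterm)).congr (fun h => ?_) fun _ => rfl
  rw [EPoly0_succ hM]
  ring

theorem stencil_isBigO {l : Filter ℝ} {M : ℕ} {c0 c1 e0 e1 v : ℝ → ℂ} {u0 u1 lam0 lam1 : ℂ}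
    (hc1b : c1 =O[l] fun _ => (1 : ℝ))
    (hv : (fun h : ℝ => v h - (u0 * e0 h + u1 * ((h : ℂ) * e1 h))) =O[l] fun h => h ^ (M + 1))
    (hc1 : (fun h => c1 h * e1 h - lam1) =O[l] fun h => h ^ M)
    (hc0 : (fun h : ℝ => c0 h - h * lam0 + c1 h * e0 h) =O[l] fun h => h ^ (M + 1)) :
    (fun h : ℝ => c0 h * u0 + c1 h * v h - h * (lam0 * u0 + lam1 * u1))
      =O[l] fun h => h ^ (M + 1) := by
  have hh : (fun h : ℝ => (h : ℂ)) =O[l] fun h => h := isBigO_of_le l fun h => by simp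
  have key := ((hc0.const_mul_left u0).add (((hh.mul hc1).const_mul_left u1).trans
    (isBigO_of_le l fun h => by rw [pow_succ']))).add (by simpa using hc1b.mul hv)
  refine key.congr (fun h => ?_) fun _ => rfl
  ring

theorem boundary_stencil_dispersion_order_general
    (p q : ℝ) (a : ℝ → ℝ) (k : ℝ → ℂ)
    (ha : ContDiffOn ℝ (⊤ : ℕ∞) a (Set.Ioo p q))
    (hk : ContDiffOn ℝ (⊤ : ℕ∞) k (Set.Ioo p q))
    (hapos : ∀ x ∈ Set.Ioo p q, 0 < a x)
    (xb : ℝ) (hxb : xb ∈ Set.Ioo p q) (M : ℕ) (hM : 1 ≤ M)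
    (lam0 lam1 : ℂ) (c0 c1 : ℝ → ℂ)
    (hc1cont : ∃ U ∈ 𝓝 (0 : ℝ), ContinuousOn c1 U)
    (hc1 : (fun h : ℝ => c1 h * EPoly1 a k xb (M + 1) h - lam1)
      =O[𝓝 (0 : ℝ)] fun h : ℝ => h ^ M)
    (hc0 : (fun h : ℝ => c0 h - (h : ℂ) * lam0 + c1 h * EPoly0 a k xb M h)
      =O[𝓝 (0 : ℝ)] fun h : ℝ => h ^ (M + 1)) :
    ∀ u : ℝ → ℂ, ContDiffOn ℝ (⊤ : ℕ∞) u (Set.Ioo p q) →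
      (∀ x ∈ Set.Ioo p q, xb ≤ x →
        deriv (fun y => (a y : ℂ) * deriv u y) x + k x * u x = 0) →
      (fun h : ℝ => c0 h * u xb + c1 h * u (xb + h)
          - (h : ℂ) * (lam0 * u xb + lam1 * deriv u xb))
        =O[𝓝[>] (0 : ℝ)] fun h : ℝ => h ^ (M + 1) := by
  intro u hu hODE
  have hc1b : c1 =O[𝓝 0] fun _ => (1 : ℝ) := by
    obtain ⟨U, hU, hc⟩ := hc1cont
    exact (hc.continuousAt hU).tendsto.isBigO_one ℝ
  have hE := iteratedDeriv_add_two_eq_ecoef_of_ode_right isOpen_Ioo ha hk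
    (fun x hx => (hapos x hx).ne') hu hxb hODE
  have htaylor := (isLittleO_sub_epoly isOpen_Ioo (convex_Ioo p q) hu hxb hE M).isBigO
  exact (stencil_isBigO hc1b htaylor hc1 (isBigO_sub_add_mul_EPoly0_succ hM hc1b hc0)).mono
    nhdsWithin_le_nhds

/-- Theorem 3.3, dispersion/boundary part.  Under the conditions (3.18)
on the boundary stencil coefficients `c₀, c₁`, the one-sided two-point stencil approximates
the boundary functional `B u = λ₀ u(x_b) + λ₁ u'(x_b)` to order `M` (in the `h`-scaled form,
`O(h^{M+1})` as `h → 0⁺`) for every smooth solution of the homogeneous equation on the right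
side of `x_b`. -/
theorem boundary_stencil_dispersion_order
    (p q : ℝ) (a : ℝ → ℝ) (k : ℝ → ℂ)
    (ha : ContDiffOn ℝ (⊤ : ℕ∞) a (Set.Ioo p q))
    (hk : ContDiffOn ℝ (⊤ : ℕ∞) k (Set.Ioo p q))
    (hapos : ∀ x ∈ Set.Ioo p q, 0 < a x)
    (xb : ℝ) (hxb : xb ∈ Set.Ioo p q) (M : ℕ) (hM : 1 ≤ M)
    (lam0 lam1 : ℂ) (c0 c1 : ℝ → ℂ)
    (hc0cont : ∃ U ∈ 𝓝 (0 : ℝ), ContinuousOn c0 U)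
    (hc1cont : ∃ U ∈ 𝓝 (0 : ℝ), ContinuousOn c1 U)
    (hc1 : (fun h : ℝ => c1 h * EPoly1 a k xb (M + 1) h - lam1)
      =O[𝓝 (0 : ℝ)] fun h : ℝ => h ^ M)
    (hc0 : (fun h : ℝ => c0 h - (h : ℂ) * lam0 + c1 h * EPoly0 a k xb M h)
      =O[𝓝 (0 : ℝ)] fun h : ℝ => h ^ (M + 1)) :
    ∀ u : ℝ → ℂ, ContDiffOn ℝ (⊤ : ℕ∞) u (Set.Ioo p q) →
      (∀ x ∈ Set.Ioo p q, xb ≤ x →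
        deriv (fun y => (a y : ℂ) * deriv u y) x + k x * u x = 0) →
      (fun h : ℝ => c0 h * u xb + c1 h * u (xb + h)
          - (h : ℂ) * (lam0 * u xb + lam1 * deriv u xb))
        =O[𝓝[>] (0 : ℝ)] fun h : ℝ => h ^ (M + 1) :=
  boundary_stencil_dispersion_order_general p q a k ha hk hapos xb hxb M hM lam0 lam1 c0 c1 hc1cont
    hc1 hc0
end
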